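/- Let F : 2^[n] → ℝ be additive across a feature i, i.e., F(S) = F(S \ {i}) + F({i}) for all S containing i. Then for any S with i ∈ S and |S| ≥ 2, and any T ⊆ [n] \ S, the discrete derivative vanishes: δ_S F(T) = 0. -/
import Mathlib


/-- Discrete derivative of a set function `F` with respect to `S` at context `T`. -/
def discreteDeriv {n : ℕ} (F : Finset (Fin n) → ℝ) (S T : Finset (Fin n)) : ℝ :=
  ∑ W ∈ S.powerset, (-1 : ℝ) ^ (S.card - W.card) * F (T ∪ W)

lemma neg_one_pow_sub_real {a b : ℕ} (h : b ≤ a) :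
    ((-1 : ℝ)) ^ (a - b) = (-1) ^ a * (-1) ^ b := by
  have h1 : ((-1 : ℝ)) ^ (a - b) * (-1) ^ b = (-1) ^ a := by
    rw [← pow_add, Nat.sub_add_cancel h]
  have h2 : ((-1 : ℝ)) ^ b * (-1) ^ b = 1 := by
    rw [← mul_pow]; norm_num
  calc ((-1 : ℝ)) ^ (a - b) = (-1) ^ (a - b) * ((-1) ^ b * (-1) ^ b) := by rw [h2, mul_one]
    _ = ((-1) ^ (a - b) * (-1) ^ b) * (-1) ^ b := by ring
    _ = (-1) ^ a * (-1) ^ b := by rw [h1]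

/-- Dummy axiom for higher-order interactions: if `F` is additive across
feature `i`, then every discrete derivative `δ_S F(T)` with `i ∈ S`, `|S| ≥ 2`
vanishes. -/
theorem discreteDeriv_dummy {n : ℕ} (F : Finset (Fin n) → ℝ) (i : Fin n)
    (hadd : ∀ A : Finset (Fin n), i ∈ A → F A = F (A.erase i) + F {i})
    (S T : Finset (Fin n)) (hiS : i ∈ S) (hS : 2 ≤ S.card)
    (hT : T ⊆ Finset.univ \ S) :
    discreteDeriv F S T = 0 := by
  classical
  have hiT : i ∉ T := fun h => (Finset.mem_sdiff.mp (hT h)).2 hiS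
  set s := S.erase i with hs
  have hins : S = insert i s := (Finset.insert_erase hiS).symm
  have his : i ∉ s := Finset.notMem_erase i S
  have hcard : s.card + 1 = S.card := by
    rw [hins, Finset.card_insert_of_notMem his]
  unfold discreteDeriv
  rw [hins, Finset.sum_powerset_insert his, ← hins]
  have key : ∀ W ∈ s.powerset,
      (-1 : ℝ) ^ (S.card - W.card) * F (T ∪ W)
        + (-1 : ℝ) ^ (S.card - (insert i W).card) * F (T ∪ insert i W)
      = (-1 : ℝ) ^ (s.card - W.card) * F {i} := by
    intro W hW
    have hWs : W ⊆ s := Finset.mem_powerset.mp hW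
    have hiW : i ∉ W := fun h => his (hWs h)
    have hWc : W.card ≤ s.card := Finset.card_le_card hWs
    have hiTW : i ∉ T ∪ W := by simp [hiT, hiW]
    have hunion : T ∪ insert i W = insert i (T ∪ W) :=
      Finset.union_insert i T W
    have hF : F (T ∪ insert i W) = F (T ∪ W) + F {i} := by
      rw [hunion, hadd _ (Finset.mem_insert_self i _),
        Finset.erase_insert hiTW]
    have hc1 : (insert i W).card = W.card + 1 :=
      Finset.card_insert_of_notMem hiW
    have he1 : S.card - (insert i W).card = s.card - W.card := by
      omega
    have he2 : S.card - W.card = (s.card - W.card) + 1 := by omega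
    rw [hF, he1, he2]
    ring
  rw [← Finset.sum_add_distrib, Finset.sum_congr rfl key]
  have hfac : ∀ W ∈ s.powerset, (-1 : ℝ) ^ (s.card - W.card) * F {i}
      = ((-1 : ℝ) ^ s.card * F {i}) * (-1 : ℝ) ^ W.card := by
    intro W hW
    rw [neg_one_pow_sub_real (Finset.card_le_card (Finset.mem_powerset.mp hW))]
    ring
  rw [Finset.sum_congr rfl hfac, ← Finset.mul_sum]
  have hsne : s.Nonempty := by
    rw [← Finset.card_pos]; omega
  have := Finset.sum_powerset_neg_one_pow_card_of_nonempty hsne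
  have hz : (∑ W ∈ s.powerset, (-1 : ℝ) ^ W.card) = 0 := by
    exact_mod_cast congrArg (Int.cast : ℤ → ℝ) this
  rw [hz, mul_zero]
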